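/- arXiv:2211.03250 — 6 statements merged into one kernel-verified Lean document; each statement's English description precedes it below -/
import Mathlib

section
/- Bound on Taylor coefficients of the CSI ratio: if |c_l| = 1 for every l ∈ Fin L, then for every k ≥ 1, every tuple (l₁,…,l_k) ∈ (Fin L)^k, and every z ∈ ℂ^L with D(z) ≠ 0, one has |(1/k!) · ∂^k f / ∂z_{l₁}⋯∂z_{l_k}(z)| ≤ (|N(z)| + |D(z)|) / |D(z)|^{k+1}. -/
open scoped BigOperators

/-- Numerator `N(z) = A + Σ_l z_l` of the CSI ratio. -/
noncomputable def Nfun (L : ℕ) (A : ℂ) (z : Fin L → ℂ) : ℂ := A + ∑ l, z l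

/-- Denominator `D(z) = B + Σ_l c_l z_l` of the CSI ratio. -/
noncomputable def Dfun (L : ℕ) (B : ℂ) (c : Fin L → ℂ) (z : Fin L → ℂ) : ℂ :=
  B + ∑ l, c l * z l

/-- The CSI ratio `f(z) = N(z)/D(z)`. -/
noncomputable def ffun (L : ℕ) (A B : ℂ) (c : Fin L → ℂ) (z : Fin L → ℂ) : ℂ :=
  Nfun L A z / Dfun L B c z

/-!
Both `N` and `D` are affine, with linear parts `φ` and `ψ`. Differentiating
`(u N + w D) / D ^ (m + 1)` in a direction `e` therefore gives `(m + 1)` times an expression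
of the same shape, `(u' N + w' D) / D ^ (m + 2)` with `u' = -ψ e u` and
`w' = (φ e u - m ψ e w) / (m + 1)`. When `‖φ e‖, ‖ψ e‖ ≤ 1` these preserve `‖u‖, ‖w‖ ≤ 1`.
Starting from `f = (1 N + 0 D) / D`, the `k`-th derivative is thus `k! (u N + w D) / D ^ (k + 1)`
with `‖u‖, ‖w‖ ≤ 1`, and the triangle inequality gives the bound.
-/

section AffineRatio

variable {𝕜 E : Type*} [RCLike 𝕜] [NormedAddCommGroup E] [NormedSpace 𝕜 E]
  {N D : E → 𝕜} {φ ψ : E →L[𝕜] 𝕜}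

theorem contDiff_of_hasFDerivAt_const (hN : ∀ y, HasFDerivAt N φ y) (n : ℕ) :
    ContDiff 𝕜 n N := by
  cases n with
  | zero => exact contDiff_zero.mpr <| continuous_iff_continuousAt.mpr fun y => (hN y).continuousAt
  | succ n => exact contDiff_succ_iff_hasFDerivAt.mpr ⟨fun _ => φ, contDiff_const, hN⟩

theorem fderiv_affine_div_pow_apply (hN : ∀ y, HasFDerivAt N φ y) (hD : ∀ y, HasFDerivAt D ψ y)
    {z : E} (hz : D z ≠ 0) (u w : 𝕜) (m : ℕ) (e : E) :
    fderiv 𝕜 (fun y => (u * N y + w * D y) / D y ^ (m + 1)) z e =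
      (-(m + 1) * ψ e * u * N z + (φ e * u - m * ψ e * w) * D z) / D z ^ (m + 2) := by
  have hnum := ((hN z).const_mul u).add ((hD z).const_mul w)
  have hinv := ((hasDerivAt_pow (m + 1) (D z)).inv (pow_ne_zero _ hz)).comp_hasFDerivAt z (hD z)
  have hf : HasFDerivAt (fun y => (u * N y + w * D y) * (D y ^ (m + 1))⁻¹) _ z :=
    hnum.mul hinv
  simp only [div_eq_mul_inv]
  rw [hf.fderiv]
  simp only [add_apply, smul_apply, smul_eq_mul, Pi.add_apply, Nat.add_sub_cancel]
  field_simp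
  push_cast
  ring

theorem norm_mul_sub_div_succ_le_one {a b c d : 𝕜} (ha : ‖a‖ ≤ 1) (hb : ‖b‖ ≤ 1) (hc : ‖c‖ ≤ 1)
    (hd : ‖d‖ ≤ 1) (m : ℕ) : ‖(a * b - m * c * d) / (m + 1)‖ ≤ 1 := by
  have hm : ‖(m + 1 : 𝕜)‖ = m + 1 := by exact_mod_cast RCLike.norm_natCast (K := 𝕜) (m + 1)
  rw [norm_div, hm, div_le_one (by positivity)]
  calc ‖a * b - m * c * d‖ ≤ ‖a‖ * ‖b‖ + m * ‖c‖ * ‖d‖ := by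
        simpa only [norm_mul, RCLike.norm_natCast] using norm_sub_le (a * b) (m * c * d)
    _ ≤ 1 * 1 + m * 1 * 1 := by gcongr
    _ = m + 1 := by ring

theorem exists_iteratedFDeriv_affine_div_eq (hN : ∀ y, HasFDerivAt N φ y)
    (hD : ∀ y, HasFDerivAt D ψ y) (k : ℕ) (v : Fin k → E) (hφ : ∀ i, ‖φ (v i)‖ ≤ 1)
    (hψ : ∀ i, ‖ψ (v i)‖ ≤ 1) :
    ∃ u w : 𝕜, ‖u‖ ≤ 1 ∧ ‖w‖ ≤ 1 ∧ ∀ z, D z ≠ 0 →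
      iteratedFDeriv 𝕜 k (fun y => N y / D y) z v =
        k.factorial * ((u * N z + w * D z) / D z ^ (k + 1)) := by
  induction k with
  | zero => exact ⟨1, 0, by simp, by simp, fun z _ => by simp⟩
  | succ k ih =>
    obtain ⟨u, w, hu, hw, hform⟩ := ih (Fin.tail v) (fun i => hφ _) (fun i => hψ _)
    refine ⟨-ψ (v 0) * u, (φ (v 0) * u - k * ψ (v 0) * w) / (k + 1), ?_,
      norm_mul_sub_div_succ_le_one (hφ 0) hu (hψ 0) hw k, fun z hz => ?_⟩
    · simpa only [norm_mul, norm_neg] using mul_le_one₀ (hψ 0) (norm_nonneg u) hu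
    have hsmooth : ContDiffAt 𝕜 (k + 1) (fun y => N y / D y) z :=
      (contDiff_of_hasFDerivAt_const hN (k + 1)).contDiffAt.div
        (contDiff_of_hasFDerivAt_const hD (k + 1)).contDiffAt hz
    have hopen : IsOpen {y | D y ≠ 0} :=
      isOpen_ne_fun (continuous_iff_continuousAt.mpr fun y => (hD y).continuousAt)
        continuous_const
    have hlocal : (fun y => iteratedFDeriv 𝕜 k (fun y => N y / D y) y (Fin.tail v)) =ᶠ[nhds z]
        fun y => k.factorial * ((u * N y + w * D y) / D y ^ (k + 1)) :=
      Filter.eventually_of_mem (hopen.mem_nhds hz) hform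
    have hdiff := hsmooth.differentiableAt_iteratedFDeriv (m := k) (by norm_cast; omega)
    rw [hdiff.iteratedFDeriv_succ_apply_left', hlocal.fderiv_eq, fderiv_const_mul, smul_apply,
      fderiv_affine_div_pow_apply hN hD hz]
    · rw [smul_eq_mul, Nat.factorial_succ]
      push_cast
      field_simp
    · have := (hN z).differentiableAt
      have := (hD z).differentiableAt
      fun_prop (disch := exact pow_ne_zero _ hz)

theorem norm_mul_add_mul_div_pow_le {u w : 𝕜} (hu : ‖u‖ ≤ 1) (hw : ‖w‖ ≤ 1) (n d : 𝕜) (m : ℕ) :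
    ‖(u * n + w * d) / d ^ m‖ ≤ (‖n‖ + ‖d‖) / ‖d‖ ^ m := by
  rw [norm_div, norm_pow]
  gcongr
  calc ‖u * n + w * d‖ ≤ ‖u‖ * ‖n‖ + ‖w‖ * ‖d‖ := by
        simpa only [norm_mul] using norm_add_le (u * n) (w * d)
    _ ≤ 1 * ‖n‖ + 1 * ‖d‖ := by gcongr
    _ = ‖n‖ + ‖d‖ := by ring

end AffineRatio

theorem hasFDerivAt_Nfun (L : ℕ) (A : ℂ) (y : Fin L → ℂ) :
    HasFDerivAt (Nfun L A) (∑ j, .proj j : (Fin L → ℂ) →L[ℂ] ℂ) y := by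
  have h : Nfun L A = fun y => A + (∑ j, .proj j : (Fin L → ℂ) →L[ℂ] ℂ) y := by
    ext y; simp [Nfun]
  exact h ▸ (ContinuousLinearMap.hasFDerivAt _).const_add A

theorem hasFDerivAt_Dfun (L : ℕ) (B : ℂ) (c : Fin L → ℂ) (y : Fin L → ℂ) :
    HasFDerivAt (Dfun L B c) (∑ j, c j • .proj j : (Fin L → ℂ) →L[ℂ] ℂ) y := by
  have h : Dfun L B c = fun y => B + (∑ j, c j • .proj j : (Fin L → ℂ) →L[ℂ] ℂ) y := by
    ext y; simp [Dfun]
  exact h ▸ (ContinuousLinearMap.hasFDerivAt _).const_add B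

theorem csi_ratio_taylor_coeff_bound_general
    (L : ℕ) (A B : ℂ) (c : Fin L → ℂ)
    (hc : ∀ l, ‖c l‖ = 1)
    (k : ℕ) (l : Fin k → Fin L)
    (z : Fin L → ℂ) (hD : Dfun L B c z ≠ 0) :
    ‖(k.factorial : ℂ)⁻¹ *
        iteratedFDeriv ℂ k (ffun L A B c) z (fun i => Pi.single (l i) 1)‖ ≤
      (‖Nfun L A z‖ + ‖Dfun L B c z‖) / ‖Dfun L B c z‖ ^ (k + 1) := by
  obtain ⟨u, w, hu, hw, hform⟩ := exists_iteratedFDeriv_affine_div_eq (hasFDerivAt_Nfun L A)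
    (hasFDerivAt_Dfun L B c) k (fun i => Pi.single (l i) 1) (by simp)
    (by simp [Pi.single_apply, hc])
  rw [show ffun L A B c = fun y => Nfun L A y / Dfun L B c y from rfl, hform z hD,
    inv_mul_cancel_left₀ (by exact_mod_cast k.factorial_ne_zero)]
  exact norm_mul_add_mul_div_pow_le hu hw _ _ _

/-- Bound on the Taylor coefficients of the CSI ratio: if `|c_l| = 1` for all `l`,
then for `k ≥ 1`, any tuple `(l₁,…,l_k)` and any `z` with `D(z) ≠ 0`,
`|(1/k!) ∂^k f/∂z_{l₁}⋯∂z_{l_k}(z)| ≤ (|N(z)| + |D(z)|) / |D(z)|^{k+1}`. -/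
theorem csi_ratio_taylor_coeff_bound
    (L : ℕ) (hL : 1 ≤ L) (A B : ℂ) (c : Fin L → ℂ)
    (hc : ∀ l, ‖c l‖ = 1)
    (k : ℕ) (hk : 1 ≤ k) (l : Fin k → Fin L)
    (z : Fin L → ℂ) (hD : Dfun L B c z ≠ 0) :
    ‖(k.factorial : ℂ)⁻¹ *
        iteratedFDeriv ℂ k (ffun L A B c) z (fun i => Pi.single (l i) 1)‖ ≤
      (‖Nfun L A z‖ + ‖Dfun L B c z‖) / ‖Dfun L B c z‖ ^ (k + 1) :=
  csi_ratio_taylor_coeff_bound_general L A B c hc k l z hD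
end

section
/- Bound on the total k-th order Taylor contribution of the CSI ratio: if |c_l| = 1 for every l ∈ Fin L, then for every k ≥ 1, every z ∈ ℂ^L with D(z) ≠ 0, every R ≥ 0, and every increment vector w ∈ ℂ^L with |w_l| ≤ R for all l, the sum over all L^k tuples (l₁,…,l_k) ∈ (Fin L)^k of |(1/k!) · ∂^k f / ∂z_{l₁}⋯∂z_{l_k}(z) · ∏_{i=1}^{k} w_{l_i}| is at most ((|N(z)| + |D(z)|)/|D(z)|) · (L·R / |D(z)|)^k. -/
open scoped BigOperators

/-! Since `N` and `D` are affine, with differentials `n = Σ_l dz_l` and `d = Σ_l c_l dz_l`, the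
`(k+1)`-st derivative of `N/D` has the closed form
`(-1)^(k+1) (k+1)! N D^-(k+2) ∏_i d(m_i) + (-1)^k k! D^-(k+1) Σ_j n(m_j) ∏_{i ≠ j} d(m_i)`,
proved by induction on `k`. By multilinearity the increments `w_{l_i}` can be moved into the
arguments `m_i = w_{l_i} e_{l_i}`, where `|n(m_i)|, |d(m_i)| ≤ R` because `|c_l| = 1`. Hence each of
the `L^k` Taylor terms is at most `(|N| + |D|) R^k / |D|^(k+1)`. -/

section AffineRatio

variable {𝕜 E : Type*} [NontriviallyNormedField 𝕜] [NormedAddCommGroup E] [NormedSpace 𝕜 E]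

noncomputable def prodMap (d : E →L[𝕜] 𝕜) (k : ℕ) :
    ContinuousMultilinearMap 𝕜 (fun _ : Fin k => E) 𝕜 :=
  (ContinuousMultilinearMap.mkPiAlgebra 𝕜 (Fin k) 𝕜).compContinuousLinearMap fun _ => d

noncomputable def prodMapUpdate (n d : E →L[𝕜] 𝕜) (k : ℕ) :
    ContinuousMultilinearMap 𝕜 (fun _ : Fin k => E) 𝕜 :=
  ∑ j, (ContinuousMultilinearMap.mkPiAlgebra 𝕜 (Fin k) 𝕜).compContinuousLinearMap
    (Function.update (fun _ => d) j n)

lemma prodMap_apply (d : E →L[𝕜] 𝕜) (k : ℕ) (m : Fin k → E) :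
    prodMap d k m = ∏ i, d (m i) := by
  simp [prodMap]

lemma prodMapUpdate_apply (n d : E →L[𝕜] 𝕜) (k : ℕ) (m : Fin k → E) :
    prodMapUpdate n d k m = ∑ j, ∏ i, Function.update (fun _ => d) j n i (m i) := by
  simp [prodMapUpdate]

lemma prodMap_succ (d : E →L[𝕜] 𝕜) (k : ℕ) (m : Fin (k + 1) → E) :
    prodMap d (k + 1) m = d (m 0) * prodMap d k (Fin.tail m) := by
  simp [prodMap_apply, Fin.prod_univ_succ, Fin.tail]

lemma prodMapUpdate_succ (n d : E →L[𝕜] 𝕜) (k : ℕ) (m : Fin (k + 1) → E) :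
    prodMapUpdate n d (k + 1) m =
      n (m 0) * prodMap d k (Fin.tail m) + d (m 0) * prodMapUpdate n d k (Fin.tail m) := by
  have h0 : ∀ j : Fin k, (0 : Fin (k + 1)) ≠ j.succ := fun j => (Fin.succ_ne_zero j).symm
  simp [prodMap_apply, prodMapUpdate_apply, Fin.sum_univ_succ, Fin.prod_univ_succ, Fin.tail,
    Function.update_apply, h0, Finset.mul_sum]

lemma norm_prodMap_apply_le {d : E →L[𝕜] 𝕜} {k : ℕ} {m : Fin k → E} {r : ℝ}
    (hd : ∀ i, ‖d (m i)‖ ≤ r) : ‖prodMap d k m‖ ≤ r ^ k := by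
  rw [prodMap_apply, norm_prod]
  simpa using Finset.prod_le_prod (fun i _ => norm_nonneg _) fun i (_ : i ∈ Finset.univ) => hd i

lemma norm_prodMapUpdate_apply_le {n d : E →L[𝕜] 𝕜} {k : ℕ} {m : Fin k → E} {r : ℝ}
    (hn : ∀ i, ‖n (m i)‖ ≤ r) (hd : ∀ i, ‖d (m i)‖ ≤ r) :
    ‖prodMapUpdate n d k m‖ ≤ k * r ^ k := by
  rw [prodMapUpdate_apply]
  refine (norm_sum_le _ _).trans ?_
  have hterm : ∀ j, ‖∏ i, Function.update (fun _ => d) j n i (m i)‖ ≤ r ^ k := fun j => by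
    rw [norm_prod]
    refine (Finset.prod_le_prod (g := fun _ => r) (fun i _ => norm_nonneg _)
      fun i (_ : i ∈ Finset.univ) => ?_).trans_eq (by simp)
    rcases eq_or_ne i j with rfl | hij
    · simpa using hn i
    · simpa [Function.update_of_ne hij] using hd i
  simpa using Finset.sum_le_sum fun j (_ : j ∈ Finset.univ) => hterm j

variable (a b : 𝕜) (n d : E →L[𝕜] 𝕜)

lemma hasFDerivAt_inv_pow_affine (j : ℕ) {y : E} (hy : b + d y ≠ 0) :
    HasFDerivAt (fun y => ((b + d y) ^ j)⁻¹)
      ((-(j * (b + d y) ^ (j - 1)) / ((b + d y) ^ j) ^ 2) • d) y := by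
  have h := ((hasDerivAt_pow j (b + d y)).inv (pow_ne_zero j hy)).comp_hasFDerivAt y
    (d.hasFDerivAt.const_add b)
  exact h

noncomputable def affineRatioIteratedFDerivSucc (k : ℕ) (y : E) :
    ContinuousMultilinearMap 𝕜 (fun _ : Fin (k + 1) => E) 𝕜 :=
  ((-1) ^ (k + 1) * (k + 1).factorial * (a + n y) * ((b + d y) ^ (k + 2))⁻¹) • prodMap d (k + 1)
    + ((-1) ^ k * k.factorial * ((b + d y) ^ (k + 1))⁻¹) • prodMapUpdate n d (k + 1)

lemma hasFDerivAt_affineRatioIteratedFDerivSucc (k : ℕ) {y : E} (hy : b + d y ≠ 0) :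
    HasFDerivAt (affineRatioIteratedFDerivSucc a b n d k)
      (affineRatioIteratedFDerivSucc a b n d (k + 1) y).curryLeft y := by
  have hP := ((((n.hasFDerivAt.const_add a).const_mul ((-1) ^ (k + 1) * (k + 1).factorial)).fun_mul
    (hasFDerivAt_inv_pow_affine b d (k + 2) hy))).smul_const (prodMap d (k + 1))
  have hQ := ((hasFDerivAt_inv_pow_affine b d (k + 1) hy).const_mul
    ((-1) ^ k * k.factorial)).smul_const (prodMapUpdate n d (k + 1))
  refine (hP.add hQ).congr_fderiv ?_
  ext v m
  simp [affineRatioIteratedFDerivSucc, prodMap_succ, prodMapUpdate_succ, Nat.factorial_succ]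
  field_simp
  ring

lemma iteratedFDeriv_succ_affine_div (k : ℕ) {y : E} (hy : b + d y ≠ 0) :
    iteratedFDeriv 𝕜 (k + 1) (fun y => (a + n y) / (b + d y)) y =
      affineRatioIteratedFDerivSucc a b n d k y := by
  induction k generalizing y with
  | zero =>
    have hf : HasFDerivAt (fun y => (a + n y) / (b + d y))
        ((a + n y) • (-((b + d y) ^ 2)⁻¹ • d) + (b + d y)⁻¹ • n) y := by
      simpa [div_eq_mul_inv] using
        (n.hasFDerivAt.const_add a).fun_mul (hasFDerivAt_inv_pow_affine b d 1 hy)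
    ext m
    rw [iteratedFDeriv_one_apply, hf.fderiv]
    simp [affineRatioIteratedFDerivSucc, prodMap_apply, prodMapUpdate_apply]
    field_simp
    ring
  | succ k ih =>
    have hopen : IsOpen {y | b + d y ≠ 0} := isOpen_ne_fun (by fun_prop) continuous_const
    have hev : iteratedFDeriv 𝕜 (k + 1) (fun y => (a + n y) / (b + d y)) =ᶠ[nhds y]
        affineRatioIteratedFDerivSucc a b n d k :=
      Filter.eventually_of_mem (hopen.mem_nhds hy) fun y' hy' => ih hy'
    ext m
    rw [iteratedFDeriv_succ_apply_left, hev.fderiv_eq,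
      (hasFDerivAt_affineRatioIteratedFDerivSucc a b n d k hy).fderiv,
      ContinuousMultilinearMap.curryLeft_apply, Fin.cons_self_tail]

lemma norm_iteratedFDeriv_affine_div_apply_le (k : ℕ) {y : E} (hy : b + d y ≠ 0)
    {m : Fin k → E} {r : ℝ} (hn : ∀ i, ‖n (m i)‖ ≤ r) (hd : ∀ i, ‖d (m i)‖ ≤ r) :
    ‖iteratedFDeriv 𝕜 k (fun y => (a + n y) / (b + d y)) y m‖ ≤
      k.factorial * (‖a + n y‖ + ‖b + d y‖) / ‖b + d y‖ ^ (k + 1) * r ^ k := by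
  have hD : 0 < ‖b + d y‖ := norm_pos_iff.mpr hy
  cases k with
  | zero =>
    rw [iteratedFDeriv_zero_apply, norm_div]
    simpa using div_le_div_of_nonneg_right (le_add_of_nonneg_right (norm_nonneg _)) hD.le
  | succ k =>
    rw [iteratedFDeriv_succ_affine_div a b n d k hy, affineRatioIteratedFDerivSucc]
    simp only [add_apply, smul_apply, smul_eq_mul]
    calc _ ≤ (k + 1).factorial * ‖a + n y‖ * (‖b + d y‖ ^ (k + 2))⁻¹ * r ^ (k + 1)
          + k.factorial * (‖b + d y‖ ^ (k + 1))⁻¹ * ((k + 1) * r ^ (k + 1)) := by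
          refine (norm_add_le _ _).trans (add_le_add ?_ ?_)
          · simp only [norm_mul, norm_pow, norm_neg, norm_one, one_pow, one_mul, norm_inv]
            gcongr
            · simpa using Nat.norm_cast_le (α := 𝕜) _
            · exact norm_prodMap_apply_le hd
          · simp only [norm_mul, norm_pow, norm_neg, norm_one, one_pow, one_mul, norm_inv]
            gcongr
            · simpa using Nat.norm_cast_le (α := 𝕜) _
            · exact_mod_cast norm_prodMapUpdate_apply_le hn hd
      _ = _ := by
          push_cast [Nat.factorial_succ]
          field_simp
          ring

end AffineRatio

section TaylorTerm

variable {𝕜 ι : Type*} [RCLike 𝕜] [Fintype ι] [DecidableEq ι]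

noncomputable def weightedSumCLM (c : ι → 𝕜) : (ι → 𝕜) →L[𝕜] 𝕜 :=
  ∑ i, c i • ContinuousLinearMap.proj i

omit [DecidableEq ι] in
lemma weightedSumCLM_apply (c y : ι → 𝕜) : weightedSumCLM c y = ∑ i, c i * y i := by
  simp [weightedSumCLM]

lemma norm_weightedSumCLM_single_le {c : ι → 𝕜} (hc : ∀ i, ‖c i‖ ≤ 1) (i : ι) (x : 𝕜) :
    ‖weightedSumCLM c (Pi.single i x)‖ ≤ ‖x‖ := by
  simpa [weightedSumCLM_apply, Pi.single_apply] using
    mul_le_of_le_one_left (norm_nonneg x) (hc i)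

lemma norm_taylorTerm_affine_div_le (a b : 𝕜) {u c : ι → 𝕜} (hu : ∀ i, ‖u i‖ ≤ 1)
    (hc : ∀ i, ‖c i‖ ≤ 1) (k : ℕ) {y : ι → 𝕜} (hy : b + weightedSumCLM c y ≠ 0)
    (l : Fin k → ι) {w : ι → 𝕜} {R : ℝ} (hw : ∀ i, ‖w i‖ ≤ R) :
    ‖(k.factorial : 𝕜)⁻¹ * iteratedFDeriv 𝕜 k
        (fun y => (a + weightedSumCLM u y) / (b + weightedSumCLM c y)) y
          (fun i => Pi.single (l i) 1) * ∏ i, w (l i)‖ ≤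
      (‖a + weightedSumCLM u y‖ + ‖b + weightedSumCLM c y‖) /
        ‖b + weightedSumCLM c y‖ ^ (k + 1) * R ^ k := by
  have hsingle : (fun i => w (l i) • Pi.single (l i) (1 : 𝕜)) =
      fun i => Pi.single (l i) (w (l i)) := by
    funext i; rw [← Pi.single_smul, smul_eq_mul, mul_one]
  rw [mul_assoc, mul_comm _ (∏ i, w (l i)), ← smul_eq_mul (∏ i, w (l i)),
    ← ContinuousMultilinearMap.map_smul_univ, hsingle, norm_mul, norm_inv, RCLike.norm_natCast]
  have hbound := norm_iteratedFDeriv_affine_div_apply_le a b (weightedSumCLM u)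
    (weightedSumCLM c) k hy (m := fun i => Pi.single (l i) (w (l i))) (r := R)
    (fun i => (norm_weightedSumCLM_single_le hu _ _).trans (hw _))
    (fun i => (norm_weightedSumCLM_single_le hc _ _).trans (hw _))
  rw [inv_mul_le_iff₀ (by positivity)]
  refine hbound.trans_eq ?_
  ring

end TaylorTerm

theorem csi_ratio_taylor_order_bound_general
    (L : ℕ) (A B : ℂ) (c : Fin L → ℂ)
    (hc : ∀ l, ‖c l‖ = 1)
    (k : ℕ)
    (z : Fin L → ℂ) (hD : Dfun L B c z ≠ 0)
    (R : ℝ) (w : Fin L → ℂ) (hw : ∀ l, ‖w l‖ ≤ R) :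
    ∑ l : Fin k → Fin L,
        ‖(k.factorial : ℂ)⁻¹ *
            iteratedFDeriv ℂ k (ffun L A B c) z (fun i => Pi.single (l i) 1) *
            ∏ i, w (l i)‖ ≤
      ((‖Nfun L A z‖ + ‖Dfun L B c z‖) / ‖Dfun L B c z‖) *
        ((L * R) / ‖Dfun L B c z‖) ^ k := by
  have hf : ffun L A B c = fun y => (A + weightedSumCLM 1 y) / (B + weightedSumCLM c y) := by
    funext y; simp [ffun, Nfun, Dfun, weightedSumCLM_apply]
  have hNz : Nfun L A z = A + weightedSumCLM 1 z := by simp [Nfun, weightedSumCLM_apply]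
  have hDz : Dfun L B c z = B + weightedSumCLM c z := by simp [Dfun, weightedSumCLM_apply]
  rw [hDz] at hD
  rw [hf, hNz, hDz]
  have hD0 : ‖B + weightedSumCLM c z‖ ≠ 0 := norm_ne_zero_iff.mpr hD
  calc _ ≤ ∑ _l : Fin k → Fin L, (‖A + weightedSumCLM 1 z‖ + ‖B + weightedSumCLM c z‖) /
          ‖B + weightedSumCLM c z‖ ^ (k + 1) * R ^ k :=
        Finset.sum_le_sum fun l _ => norm_taylorTerm_affine_div_le A B (fun _ => by simp)
          (fun l => (hc l).le) k hD l hw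
    _ = _ := by
        simp only [Finset.sum_const, Finset.card_univ, Fintype.card_fun, Fintype.card_fin,
          nsmul_eq_mul]
        rw [div_pow, mul_pow, pow_succ]
        push_cast
        field_simp

/-- Bound on the total `k`-th order Taylor contribution of the CSI ratio: if
`|c_l| = 1` for all `l`, then for `k ≥ 1`, `z` with `D(z) ≠ 0`, `R ≥ 0`, and any
increment vector `w` with `|w_l| ≤ R` for all `l`, the sum over all `L^k` tuples
`(l₁,…,l_k)` of `|(1/k!) ∂^k f/∂z_{l₁}⋯∂z_{l_k}(z) ∏_i w_{l_i}|` is at most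
`((|N(z)|+|D(z)|)/|D(z)|) (L·R/|D(z)|)^k`. -/
theorem csi_ratio_taylor_order_bound
    (L : ℕ) (hL : 1 ≤ L) (A B : ℂ) (c : Fin L → ℂ)
    (hc : ∀ l, ‖c l‖ = 1)
    (k : ℕ) (hk : 1 ≤ k)
    (z : Fin L → ℂ) (hD : Dfun L B c z ≠ 0)
    (R : ℝ) (hR : 0 ≤ R) (w : Fin L → ℂ) (hw : ∀ l, ‖w l‖ ≤ R) :
    ∑ l : Fin k → Fin L,
        ‖(k.factorial : ℂ)⁻¹ *
            iteratedFDeriv ℂ k (ffun L A B c) z (fun i => Pi.single (l i) 1) *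
            ∏ i, w (l i)‖ ≤
      ((‖Nfun L A z‖ + ‖Dfun L B c z‖) / ‖Dfun L B c z‖) *
        ((L * R) / ‖Dfun L B c z‖) ^ k :=
  csi_ratio_taylor_order_bound_general L A B c hc k z hD R w hw
end

section
/- Convergence of the Taylor series of the CSI ratio (Proposition 1): assume |c_l| = 1 for every l ∈ Fin L, let z⁰ ∈ ℂ^L with D(z⁰) ≠ 0, and let R ≥ 0 satisfy L·R < |D(z⁰)|. Then for every increment vector w ∈ ℂ^L with |w_l| ≤ R for all l, the multivariate Taylor series of f at z⁰ evaluated at w converges absolutely; precisely, the family of terms (1/k!) · ∂^k f / ∂z_{l₁}⋯∂z_{l_k}(z⁰) · ∏_{i=1}^{k} w_{l_i}, indexed by k ∈ ℕ and tuples (l₁,…,l_k) ∈ (Fin L)^k, is absolutely summable, with Σ_{k≥0} Σ_{tuples} |term| ≤ ((|N(z⁰)| + |D(z⁰)|)/|D(z⁰)|) · 1/(1 − L·R/|D(z⁰)|). (In the channel model, R = 2·max_l |α_l| and the hypothesis is the paper's condition |y_{n−q}| > 2L·max_l |α_l|.) -/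
open scoped BigOperators

/-- The Taylor term of order `k` for the tuple `l : Fin k → Fin L`, evaluated at
increments `w`: `(1/k!) ∂^k f/∂z_{l₁}⋯∂z_{l_k}(z⁰) ∏_i w_{l_i}`. -/
noncomputable def taylorTerm (L : ℕ) (A B : ℂ) (c : Fin L → ℂ)
    (z₀ w : Fin L → ℂ) (p : Σ k : ℕ, Fin k → Fin L) : ℂ :=
  (p.1.factorial : ℂ)⁻¹ *
    iteratedFDeriv ℂ p.1 (ffun L A B c) z₀ (fun i => Pi.single (p.2 i) 1) *
    ∏ i, w (p.2 i)

/-!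
Writing `S`, `T` for the linear parts of `N`, `D`, one has
`f(z⁰ + h) = N₀/D₀ + (D₀ S h - N₀ T h)/D₀² · ∑ₖ (-T h/D₀)ᵏ`, an explicit power series at `z⁰`;
the `k`-th iterated derivative of `f` at `z⁰` is the sum of its `k`-th coefficient over the `k!`
permutations of the arguments. On coordinate vectors `|S e_l| = 1` and `|T e_l| = |c_l| = 1`, so
the `k`-th coefficient is at most `(|N₀| + |D₀|)/|D₀|^(k+1)` there, each Taylor term of order `k`
is at most `(|N₀| + |D₀|)/|D₀| · (R/|D₀|)ᵏ`, and the `Lᵏ` terms of order `k` add up to a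
geometric series of ratio `L R/|D₀| < 1`.
-/
open scoped NNReal ENNReal Nat

section AffineRatio

variable {𝕜 E : Type*} [NontriviallyNormedField 𝕜] [NormedAddCommGroup E] [NormedSpace 𝕜 E]
  (S T : E →L[𝕜] 𝕜) (n d : 𝕜)

/-- With `q = -T y / d`, `(n + S y) / (d + T y) = n / d + (d S y - n T y) / d² · ∑ₖ qᵏ`. -/
noncomputable def affineRatioSeries : FormalMultilinearSeries 𝕜 E 𝕜
  | 0 => ContinuousMultilinearMap.constOfIsEmpty 𝕜 _ (n / d)
  | k + 1 => ((-d) ^ k * d ^ 2)⁻¹ •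
      (ContinuousMultilinearMap.mkPiAlgebra 𝕜 (Fin (k + 1)) 𝕜).compContinuousLinearMap
        (Fin.cons (d • S - n • T) fun _ : Fin k => T)

@[simp]
lemma affineRatioSeries_zero_apply (v : Fin 0 → E) : affineRatioSeries S T n d 0 v = n / d :=
  rfl

lemma affineRatioSeries_succ_apply {k : ℕ} (v : Fin (k + 1) → E) :
    affineRatioSeries S T n d (k + 1) v =
      ((-d) ^ k * d ^ 2)⁻¹ * ((d * S (v 0) - n * T (v 0)) * ∏ i : Fin k, T (v i.succ)) := by
  simp [affineRatioSeries, Fin.prod_univ_succ]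

lemma hasSum_affineRatioSeries (hd : d ≠ 0) {y : E} (hy : ‖T y‖ < ‖d‖) :
    HasSum (fun k => affineRatioSeries S T n d k fun _ => y) ((n + S y) / (d + T y)) := by
  have hq : ‖T y / -d‖ < 1 := by
    rw [norm_div, norm_neg, div_lt_one (norm_pos_iff.mpr hd)]; exact hy
  have hdy : d + T y ≠ 0 := by
    intro h
    rw [add_eq_zero_iff_eq_neg.mp h, norm_neg] at hy
    exact lt_irrefl _ hy
  have hgeom : HasSum (fun k => affineRatioSeries S T n d (k + 1) fun _ => y)
      ((d * S y - n * T y) / d ^ 2 * (1 - T y / -d)⁻¹) := by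
    refine ((hasSum_geometric_of_norm_lt_one hq).mul_left _).congr_fun fun k => ?_
    rw [affineRatioSeries_succ_apply, Finset.prod_const, Finset.card_univ, Fintype.card_fin,
      div_pow]
    field_simp
  have hhead :
      (n + S y) / (d + T y) - ∑ k ∈ Finset.range 1, affineRatioSeries S T n d k (fun _ => y) =
        (d * S y - n * T y) / d ^ 2 * (1 - T y / -d)⁻¹ := by
    rw [Finset.sum_range_one, affineRatioSeries_zero_apply, div_neg, sub_neg_eq_add]
    field_simp
    ring
  rw [← hasSum_nat_add_iff' 1, hhead]
  exact hgeom

lemma norm_affineRatioSeries_succ_le (k : ℕ) :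
    ‖affineRatioSeries S T n d (k + 1)‖ ≤ ‖d • S - n • T‖ * ‖T‖ ^ k / ‖d‖ ^ (k + 2) := by
  simp only [affineRatioSeries]
  rw [norm_smul, norm_inv, norm_mul, norm_pow, norm_pow, norm_neg, ← pow_add, inv_mul_eq_div]
  gcongr
  refine (ContinuousMultilinearMap.norm_compContinuousLinearMap_le _ _).trans ?_
  rw [Fin.prod_univ_succ, Fin.cons_zero]
  simp only [Fin.cons_succ, Finset.prod_const, Finset.card_univ, Fintype.card_fin]
  exact mul_le_of_le_one_left (by positivity) ContinuousMultilinearMap.norm_mkPiAlgebra_le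

lemma le_radius_affineRatioSeries (hd : d ≠ 0) :
    ((‖d‖₊ / (‖T‖₊ + 1) : ℝ≥0) : ℝ≥0∞) ≤ (affineRatioSeries S T n d).radius := by
  set r : ℝ := ‖d‖ / (‖T‖ + 1)
  have hTr : ‖T‖ * r ≤ ‖d‖ := by
    calc ‖T‖ * r ≤ (‖T‖ + 1) * r := by gcongr; linarith
      _ = ‖d‖ := mul_div_cancel₀ _ (by positivity)
  have hr : r ≤ ‖d‖ := div_le_self (norm_nonneg _) (by linarith [norm_nonneg T])
  have hd' : 0 < ‖d‖ := norm_pos_iff.mpr hd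
  refine FormalMultilinearSeries.le_radius_of_bound _ (‖n / d‖ + ‖d • S - n • T‖ / ‖d‖)
    fun k => ?_
  push_cast
  rcases k with _ | k
  · simp only [affineRatioSeries, ContinuousMultilinearMap.norm_constOfIsEmpty, pow_zero,
      mul_one]
    exact le_add_of_nonneg_right (by positivity)
  calc ‖affineRatioSeries S T n d (k + 1)‖ * r ^ (k + 1)
      ≤ ‖d • S - n • T‖ * ‖T‖ ^ k / ‖d‖ ^ (k + 2) * r ^ (k + 1) := by
        gcongr; exact norm_affineRatioSeries_succ_le S T n d k
    _ = ‖d • S - n • T‖ * (‖T‖ * r) ^ k * r / ‖d‖ ^ (k + 2) := by ring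
    _ ≤ ‖d • S - n • T‖ * ‖d‖ ^ k * ‖d‖ / ‖d‖ ^ (k + 2) := by gcongr
    _ = ‖d • S - n • T‖ / ‖d‖ := by field_simp; ring
    _ ≤ _ := le_add_of_nonneg_left (norm_nonneg _)

theorem hasFPowerSeriesOnBall_div_affine (a b : 𝕜) (x₀ : E) (hd : b + T x₀ ≠ 0) :
    HasFPowerSeriesOnBall (fun x => (a + S x) / (b + T x))
      (affineRatioSeries S T (a + S x₀) (b + T x₀)) x₀ (‖b + T x₀‖₊ / (‖T‖₊ + 1) : ℝ≥0) where
  r_le := le_radius_affineRatioSeries S T _ _ hd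
  r_pos := ENNReal.coe_pos.mpr (div_pos (nnnorm_pos.mpr hd) (by positivity))
  hasSum {y} hy := by
    have hy' : ‖y‖ < ‖b + T x₀‖ / (‖T‖ + 1) := by
      simpa only [Metric.eball_coe, mem_ball_zero_iff, NNReal.coe_div, NNReal.coe_add, coe_nnnorm,
        NNReal.coe_one] using hy
    have hTy : ‖T y‖ < ‖b + T x₀‖ :=
      calc ‖T y‖ ≤ ‖T‖ * ‖y‖ := T.le_opNorm y
        _ ≤ (‖T‖ + 1) * ‖y‖ := by gcongr; linarith
        _ < ‖b + T x₀‖ := (lt_div_iff₀' (by positivity)).mp hy'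
    simp only [map_add, ← add_assoc]
    exact hasSum_affineRatioSeries S T _ _ hd hTy

lemma norm_affineRatioSeries_apply_le (hd : d ≠ 0) {k : ℕ} (v : Fin k → E)
    (hS : ∀ i, ‖S (v i)‖ ≤ 1) (hT : ∀ i, ‖T (v i)‖ ≤ 1) :
    ‖affineRatioSeries S T n d k v‖ ≤ (‖n‖ + ‖d‖) / ‖d‖ ^ (k + 1) := by
  have hd' : 0 < ‖d‖ := norm_pos_iff.mpr hd
  rcases k with _ | k
  · rw [affineRatioSeries_zero_apply, norm_div, pow_one]
    gcongr
    linarith [norm_nonneg d]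
  have hU : ‖d * S (v 0) - n * T (v 0)‖ ≤ ‖d‖ + ‖n‖ := by
    refine (norm_sub_le _ _).trans ?_
    rw [norm_mul, norm_mul]
    gcongr
    · exact mul_le_of_le_one_right (norm_nonneg _) (hS 0)
    · exact mul_le_of_le_one_right (norm_nonneg _) (hT 0)
  have hP : ∏ i : Fin k, ‖T (v i.succ)‖ ≤ 1 :=
    Finset.prod_le_one (fun _ _ => norm_nonneg _) fun i _ => hT _
  rw [affineRatioSeries_succ_apply, norm_mul, norm_mul, norm_inv, norm_mul, norm_pow, norm_pow,
    norm_neg, norm_prod]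
  calc (‖d‖ ^ k * ‖d‖ ^ 2)⁻¹ * (‖d * S (v 0) - n * T (v 0)‖ * ∏ i : Fin k, ‖T (v i.succ)‖)
      ≤ (‖d‖ ^ k * ‖d‖ ^ 2)⁻¹ * ((‖d‖ + ‖n‖) * 1) := by gcongr
    _ = (‖n‖ + ‖d‖) / ‖d‖ ^ (k + 1 + 1) := by field_simp; ring

theorem norm_iteratedFDeriv_div_affine_apply_le [CompleteSpace 𝕜] (a b : 𝕜) (x₀ : E)
    (hd : b + T x₀ ≠ 0) {k : ℕ} (v : Fin k → E)
    (hS : ∀ i, ‖S (v i)‖ ≤ 1) (hT : ∀ i, ‖T (v i)‖ ≤ 1) :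
    ‖iteratedFDeriv 𝕜 k (fun x => (a + S x) / (b + T x)) x₀ v‖ ≤
      k ! * ((‖a + S x₀‖ + ‖b + T x₀‖) / ‖b + T x₀‖ ^ (k + 1)) := by
  rw [(hasFPowerSeriesOnBall_div_affine S T a b x₀ hd).iteratedFDeriv_eq_sum_of_completeSpace]
  calc _ ≤ ∑ σ : Equiv.Perm (Fin k),
        ‖affineRatioSeries S T (a + S x₀) (b + T x₀) k fun i => v (σ i)‖ := norm_sum_le _ _
    _ ≤ ∑ _σ : Equiv.Perm (Fin k), (‖a + S x₀‖ + ‖b + T x₀‖) / ‖b + T x₀‖ ^ (k + 1) :=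
        Finset.sum_le_sum fun σ _ =>
          norm_affineRatioSeries_apply_le S T _ _ hd _ (fun i => hS _) fun i => hT _
    _ = _ := by simp [Fintype.card_perm]

end AffineRatio

lemma hasSum_sigma_pow (ι : Type*) [Fintype ι] {ρ : ℝ} (hρ : 0 ≤ ρ)
    (hρι : Fintype.card ι * ρ < 1) :
    HasSum (fun p : Σ k : ℕ, Fin k → ι => ρ ^ p.1) (1 - Fintype.card ι * ρ)⁻¹ := by
  have hfiber (k : ℕ) :
      HasSum (fun e : Fin k → ι => ρ ^ k) ((Fintype.card ι * ρ) ^ k) := by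
    convert hasSum_fintype (fun _ : Fin k → ι => ρ ^ k) using 1
    simp [mul_pow]
  refine (hasSum_geometric_of_lt_one (by positivity) hρι).sigma_of_hasSum hfiber ?_
  exact (summable_sigma_of_nonneg fun _ => by positivity).mpr
    ⟨fun k => (hfiber k).summable, (summable_geometric_of_lt_one (by positivity) hρι).congr
      fun k => ((hfiber k).tsum_eq).symm⟩

section DotProduct

variable {𝕜 ι : Type*} [NontriviallyNormedField 𝕜] [Fintype ι]

noncomputable def dotCLM (c : ι → 𝕜) : (ι → 𝕜) →L[𝕜] 𝕜 := ∑ l, c l • ContinuousLinearMap.proj l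

lemma dotCLM_apply (c z : ι → 𝕜) : dotCLM c z = ∑ l, c l * z l := by
  simp [dotCLM]

@[simp]
lemma dotCLM_single [DecidableEq ι] (c : ι → 𝕜) (l : ι) : dotCLM c (Pi.single l 1) = c l := by
  simp [dotCLM_apply, Pi.single_apply]

end DotProduct

lemma Nfun_eq_add_dotCLM (L : ℕ) (A : ℂ) (z : Fin L → ℂ) : Nfun L A z = A + dotCLM 1 z := by
  simp [Nfun, dotCLM_apply]

lemma Dfun_eq_add_dotCLM (L : ℕ) (B : ℂ) (c z : Fin L → ℂ) : Dfun L B c z = B + dotCLM c z := by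
  simp [Dfun, dotCLM_apply]

lemma ffun_eq_div_affine (L : ℕ) (A B : ℂ) (c : Fin L → ℂ) :
    ffun L A B c = fun z => (A + dotCLM 1 z) / (B + dotCLM c z) := by
  ext z
  rw [ffun, Nfun_eq_add_dotCLM, Dfun_eq_add_dotCLM]

lemma norm_iteratedFDeriv_ffun_single_le (L : ℕ) (A B : ℂ) {c : Fin L → ℂ}
    (hc : ∀ l, ‖c l‖ = 1) {z₀ : Fin L → ℂ} (hD : Dfun L B c z₀ ≠ 0) {k : ℕ} (e : Fin k → Fin L) :
    ‖iteratedFDeriv ℂ k (ffun L A B c) z₀ (fun i => Pi.single (e i) 1)‖ ≤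
      k ! * ((‖Nfun L A z₀‖ + ‖Dfun L B c z₀‖) / ‖Dfun L B c z₀‖ ^ (k + 1)) := by
  rw [Dfun_eq_add_dotCLM] at hD ⊢
  rw [ffun_eq_div_affine, Nfun_eq_add_dotCLM]
  exact norm_iteratedFDeriv_div_affine_apply_le _ _ A B z₀ hD _ (fun i => by simp)
    fun i => by simp [hc]

lemma norm_taylorTerm_le (L : ℕ) (A B : ℂ) {c : Fin L → ℂ} (hc : ∀ l, ‖c l‖ = 1)
    {z₀ : Fin L → ℂ} (hD : Dfun L B c z₀ ≠ 0) {w : Fin L → ℂ} {R : ℝ} (hw : ∀ l, ‖w l‖ ≤ R)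
    (p : Σ k : ℕ, Fin k → Fin L) :
    ‖taylorTerm L A B c z₀ w p‖ ≤
      (‖Nfun L A z₀‖ + ‖Dfun L B c z₀‖) / ‖Dfun L B c z₀‖ * (R / ‖Dfun L B c z₀‖) ^ p.1 := by
  obtain ⟨k, e⟩ := p
  have hd : 0 < ‖Dfun L B c z₀‖ := norm_pos_iff.mpr hD
  have hprod : ‖∏ i, w (e i)‖ ≤ R ^ k := by
    rw [norm_prod]
    calc ∏ i, ‖w (e i)‖ ≤ ∏ _i : Fin k, R :=
          Finset.prod_le_prod (fun i _ => norm_nonneg _) fun i _ => hw (e i)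
      _ = R ^ k := by simp
  rw [taylorTerm, norm_mul, norm_mul, norm_inv, Complex.norm_natCast]
  calc (k ! : ℝ)⁻¹ * ‖iteratedFDeriv ℂ k (ffun L A B c) z₀ (fun i => Pi.single (e i) 1)‖ *
        ‖∏ i, w (e i)‖
      ≤ (k ! : ℝ)⁻¹ * (k ! * ((‖Nfun L A z₀‖ + ‖Dfun L B c z₀‖) / ‖Dfun L B c z₀‖ ^ (k + 1))) *
        R ^ k := by
        gcongr
        exact norm_iteratedFDeriv_ffun_single_le L A B hc hD e
    _ = _ := by
        rw [div_pow]
        field_simp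
        ring

theorem csi_ratio_taylor_series_convergence_general
    (L : ℕ) (A B : ℂ) (c : Fin L → ℂ)
    (hc : ∀ l, ‖c l‖ = 1)
    (z₀ : Fin L → ℂ) (hD : Dfun L B c z₀ ≠ 0)
    (R : ℝ) (hR : 0 ≤ R) (hLR : (L : ℝ) * R < ‖Dfun L B c z₀‖)
    (w : Fin L → ℂ) (hw : ∀ l, ‖w l‖ ≤ R) :
    Summable (fun p : Σ k : ℕ, Fin k → Fin L => ‖taylorTerm L A B c z₀ w p‖) ∧
    ∑' p : Σ k : ℕ, Fin k → Fin L, ‖taylorTerm L A B c z₀ w p‖ ≤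
      ((‖Nfun L A z₀‖ + ‖Dfun L B c z₀‖) / ‖Dfun L B c z₀‖) *
        (1 / (1 - (L : ℝ) * R / ‖Dfun L B c z₀‖)) := by
  have hd : 0 < ‖Dfun L B c z₀‖ := norm_pos_iff.mpr hD
  have hρ : 0 ≤ R / ‖Dfun L B c z₀‖ := div_nonneg hR hd.le
  have hρL : Fintype.card (Fin L) * (R / ‖Dfun L B c z₀‖) < 1 := by
    rwa [Fintype.card_fin, ← mul_div_assoc, div_lt_one hd]
  have hmajorant := (hasSum_sigma_pow (Fin L) hρ hρL).mul_left
    ((‖Nfun L A z₀‖ + ‖Dfun L B c z₀‖) / ‖Dfun L B c z₀‖)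
  have hbound := norm_taylorTerm_le L A B hc hD hw
  have hsum := hmajorant.summable.of_nonneg_of_le (fun _ => norm_nonneg _) hbound
  refine ⟨hsum, (hasSum_le hbound hsum.hasSum hmajorant).trans_eq ?_⟩
  rw [Fintype.card_fin, one_div, mul_div_assoc]

/-- Convergence of the Taylor series of the CSI ratio (Proposition 1): if
`|c_l| = 1` for all `l`, `D(z⁰) ≠ 0`, `R ≥ 0` with `L·R < |D(z⁰)|`, and
`|w_l| ≤ R` for all `l`, then the family of Taylor terms, indexed by `k ∈ ℕ`
and tuples `(l₁,…,l_k) ∈ (Fin L)^k`, is absolutely summable and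
`Σ_{k≥0} Σ_{tuples} |term| ≤ ((|N(z⁰)|+|D(z⁰)|)/|D(z⁰)|) · 1/(1 − L·R/|D(z⁰)|)`. -/
theorem csi_ratio_taylor_series_convergence
    (L : ℕ) (hL : 1 ≤ L) (A B : ℂ) (c : Fin L → ℂ)
    (hc : ∀ l, ‖c l‖ = 1)
    (z₀ : Fin L → ℂ) (hD : Dfun L B c z₀ ≠ 0)
    (R : ℝ) (hR : 0 ≤ R) (hLR : (L : ℝ) * R < ‖Dfun L B c z₀‖)
    (w : Fin L → ℂ) (hw : ∀ l, ‖w l‖ ≤ R) :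
    Summable (fun p : Σ k : ℕ, Fin k → Fin L => ‖taylorTerm L A B c z₀ w p‖) ∧
    ∑' p : Σ k : ℕ, Fin k → Fin L, ‖taylorTerm L A B c z₀ w p‖ ≤
      ((‖Nfun L A z₀‖ + ‖Dfun L B c z₀‖) / ‖Dfun L B c z₀‖) *
        (1 / (1 - (L : ℝ) * R / ‖Dfun L B c z₀‖)) :=
  csi_ratio_taylor_series_convergence_general L A B c hc z₀ hD R hR hLR w hw
end

section
/- Unidentifiability of the dynamic delay from the CSI ratio (the 'only if' direction of Proposition 3): for every real x, defining shifted static components S̃_n[g] := S_n[g] · e^{i 2π (g/T) x}, the received samples satisfy ỹ_n[m,g] = e^{i 2π (g/T) x} · y_n[m,g] for all n, m, g, where ỹ_n[m,g] is built from statics S̃_n[g] and dynamic delay τ₁ − x while y_n[m,g] is built from statics S_n[g] and dynamic delay τ₁. Consequently, whenever y_{n−q}[m,g] ≠ 0 one also has ỹ_{n−q}[m,g] ≠ 0 and the CSI ratios coincide: ỹ_n[m,g]/ỹ_{n−q}[m,g] = y_n[m,g]/y_{n−q}[m,g]; hence two channels with different dynamic delays τ₁ and τ₁ − x (and correspondingly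 rotated static components) produce identical CSI ratios. -/
/-- Offset-free received sample for a single dynamic path with dynamic delay `τ`
and static components `S`:
`y_n[m,g] = S_n[g] + α₁ e^{i n φ₁} e^{i 2π m T_A f_{D,1}} e^{−i 2π (g/T) τ}`. -/
noncomputable def ysp (T TA : ℝ) (α₁ : ℂ) (φ₁ fD τ : ℝ) (S : ℤ → ℕ → ℂ)
    (n : ℤ) (m g : ℕ) : ℂ :=
  S n g + α₁ * Complex.exp (Complex.I * n * φ₁) *
    Complex.exp (Complex.I * 2 * Real.pi * m * TA * fD) *
    Complex.exp (-Complex.I * 2 * Real.pi * (g / T) * τ)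

/-- Unidentifiability of the dynamic delay from the CSI ratio ('only if' direction of
Proposition 3): for every real `x`, the channel with statics
`S̃_n[g] = S_n[g] e^{i 2π (g/T) x}` and dynamic delay `τ₁ − x` produces samples
`ỹ_n[m,g] = e^{i 2π (g/T) x} y_n[m,g]`; hence whenever `y_{n−q}[m,g] ≠ 0`, also
`ỹ_{n−q}[m,g] ≠ 0` and the two CSI ratios coincide. -/
theorem csi_ratio_delay_unidentifiable
    (T TA : ℝ) (hT : 0 < T) (hTA : 0 < TA)
    (α₁ : ℂ) (φ₁ fD τ₁ : ℝ) (S : ℤ → ℕ → ℂ) (x : ℝ) :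
    (∀ (n : ℤ) (m g : ℕ),
      ysp T TA α₁ φ₁ fD (τ₁ - x)
          (fun n' g' => S n' g' * Complex.exp (Complex.I * 2 * Real.pi * (g' / T) * x))
          n m g =
        Complex.exp (Complex.I * 2 * Real.pi * (g / T) * x) *
          ysp T TA α₁ φ₁ fD τ₁ S n m g) ∧
    (∀ (n q : ℤ) (m g : ℕ),
      ysp T TA α₁ φ₁ fD τ₁ S (n - q) m g ≠ 0 →
        ysp T TA α₁ φ₁ fD (τ₁ - x)
            (fun n' g' => S n' g' * Complex.exp (Complex.I * 2 * Real.pi * (g' / T) * x))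
            (n - q) m g ≠ 0 ∧
        ysp T TA α₁ φ₁ fD (τ₁ - x)
            (fun n' g' => S n' g' * Complex.exp (Complex.I * 2 * Real.pi * (g' / T) * x))
            n m g /
          ysp T TA α₁ φ₁ fD (τ₁ - x)
            (fun n' g' => S n' g' * Complex.exp (Complex.I * 2 * Real.pi * (g' / T) * x))
            (n - q) m g =
        ysp T TA α₁ φ₁ fD τ₁ S n m g / ysp T TA α₁ φ₁ fD τ₁ S (n - q) m g) := by
  have key : ∀ (n : ℤ) (m g : ℕ),
      ysp T TA α₁ φ₁ fD (τ₁ - x)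
          (fun n' g' => S n' g' * Complex.exp (Complex.I * 2 * Real.pi * (g' / T) * x))
          n m g =
        Complex.exp (Complex.I * 2 * Real.pi * (g / T) * x) *
          ysp T TA α₁ φ₁ fD τ₁ S n m g := by
    intro n m g
    simp only [ysp, mul_add]
    congr 1
    · ring
    · have : Complex.exp (-Complex.I * 2 * Real.pi * (g / T) * ((τ₁ : ℂ) - x)) =
          Complex.exp (Complex.I * 2 * Real.pi * (g / T) * x) *
          Complex.exp (-Complex.I * 2 * Real.pi * (g / T) * τ₁) := by
        rw [← Complex.exp_add]; ring_nf
      push_cast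
      rw [this]; ring
  refine ⟨key, fun n q m g h0 => ?_⟩
  have hne : Complex.exp (Complex.I * 2 * Real.pi * (g / T) * x) ≠ 0 := Complex.exp_ne_zero _
  rw [key, key]
  exact ⟨mul_ne_zero hne h0, by rw [mul_div_mul_left _ _ hne]⟩
end

section
/- Column proportionality in the AoA manifold (core of Proposition 2): for every n' ∈ Fin N and every ω ∈ ℂ with S + ω·D_{n'} ≠ 0, the D-CSIR column vector v^{(n')}(ω) ∈ ℂ^N with entries v^{(n')}(ω)_i = (S + ω·D_i)/(S + ω·D_{n'}) − Y_i/Y_{n'} satisfies v^{(n')}(ω) = (S(1 − ω)/(Y_{n'}(S + ω·D_{n'}))) · u_{n'}, where u_{n'} ∈ ℂ^N has entries (u_{n'})_i = D_{n'} − D_i. Moreover the first- and second-order AoA basis blocks at φ = 0, namely d1(0,n') with entries (D_{n'} − D_i)/Y_{n'}² and d2(0,0,n') with entries 2(D_i − D_{n'})/Y_{n'}³, satisfy d1(0,n') = (1/Y_{n'}²) · u_{n'} and d2(0,0,n') = (−2/Y_{n'}³) · u_{n'}; hence v^{(n')}(ω), d1(0,n'), and d2(0,0,n') all lie on the complex line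 spanned by u_{n'}. -/
/-- Column proportionality in the AoA manifold (core of Proposition 2): in the
single-dynamic-path setting with equal static component `S` across antennas,
the D-CSIR column `v^{(n')}(ω)`, the first-order AoA basis block `d1(0,n')`, and
the second-order AoA basis block `d2(0,0,n')` are all scalar multiples of the
vector `u_{n'}` with entries `D_{n'} − D_i`. -/
theorem aoa_manifold_column_proportionality
    (N : ℕ) (hN : 1 ≤ N) (S : ℂ) (D : Fin N → ℂ)
    (hY : ∀ i, S + D i ≠ 0)
    (n' : Fin N) (ω : ℂ) (hω : S + ω * D n' ≠ 0) :
    ((fun i : Fin N => (S + ω * D i) / (S + ω * D n') - (S + D i) / (S + D n')) =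
        (S * (1 - ω) / ((S + D n') * (S + ω * D n'))) •
          (fun i : Fin N => D n' - D i)) ∧
    ((fun i : Fin N => (D n' - D i) / (S + D n') ^ 2) =
        (1 / (S + D n') ^ 2) • (fun i : Fin N => D n' - D i)) ∧
    ((fun i : Fin N => 2 * (D i - D n') / (S + D n') ^ 3) =
        (-2 / (S + D n') ^ 3) • (fun i : Fin N => D n' - D i)) := by
  refine ⟨funext fun i => ?_, funext fun i => ?_, funext fun i => ?_⟩ <;>
    simp only [Pi.smul_apply, smul_eq_mul] <;>
    field_simp [hY n'] <;> ring
end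

section
/- Separated factorization of the single-path CSI ratio (equation (25) of the paper): assume α₁ ≠ 0. For all antennas n, n−q, packets m, and subcarriers g with y_{n−q}[m,g] ≠ 0, one has y_n[m,g]/y_{n−q}[m,g] = e^{i q φ₁} · (S'_n[g] + D'[m]) / (S'_{n−q}[g] + D'[m]), where D'[m] = e^{i 2π m T_A f_{D,1}} depends only on m and S'_k[g] = S_k[g] · e^{−i k φ₁} · e^{i 2π (g/T) τ} / α₁ depends only on k and g; in particular, the packet index m and the subcarrier index g are separated in the CSI ratio. -/
/-- Doppler factor `D'[m] = e^{i 2π m T_A f_{D,1}}`, depending only on the packet index. -/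
noncomputable def Dprime (TA fD : ℝ) (m : ℕ) : ℂ :=
  Complex.exp (Complex.I * 2 * Real.pi * m * TA * fD)

/-- Normalized static component
`S'_k[g] = S_k[g] e^{−i k φ₁} e^{i 2π (g/T) τ} / α₁`, depending only on the antenna
index `k` and the subcarrier index `g`. -/
noncomputable def Sprime (T : ℝ) (α₁ : ℂ) (φ₁ τ : ℝ) (S : ℤ → ℕ → ℂ)
    (k : ℤ) (g : ℕ) : ℂ :=
  S k g * Complex.exp (-Complex.I * k * φ₁) *
    Complex.exp (Complex.I * 2 * Real.pi * (g / T) * τ) / α₁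

/-! Factoring the dynamic term `α₁ e^{i k φ₁} e^{−i 2π (g/T) τ}` out of `y_k[m,g]` leaves
`S'_k[g] + D'[m]`. For the two antennas `n` and `n − q` the factors agree up to
`e^{i q φ₁}`, and the remaining common factor is nonzero, so it cancels in the ratio. -/

open Complex

lemma ysp_eq_mul_Sprime_add_Dprime (T TA : ℝ) {α₁ : ℂ} (hα : α₁ ≠ 0) (φ₁ fD τ : ℝ)
    (S : ℤ → ℕ → ℂ) (k : ℤ) (m g : ℕ) :
    ysp T TA α₁ φ₁ fD τ S k m g =
      α₁ * exp (I * k * φ₁) * exp (-I * 2 * Real.pi * (g / T) * τ) *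
        (Sprime T α₁ φ₁ τ S k g + Dprime TA fD m) := by
  have hS : α₁ * exp (I * k * φ₁) * exp (-I * 2 * Real.pi * (g / T) * τ) *
      Sprime T α₁ φ₁ τ S k g = S k g := by
    rw [Sprime, show -I * k * φ₁ = -(I * k * φ₁) by ring,
      show I * 2 * Real.pi * (g / T) * τ = -(-I * 2 * Real.pi * (g / T) * τ) by ring,
      exp_neg, exp_neg]
    field_simp
  rw [mul_add, hS, ysp, Dprime]
  ring

theorem csi_ratio_separated_factorization_general
    (T TA : ℝ)
    (α₁ : ℂ) (hα : α₁ ≠ 0) (φ₁ fD τ : ℝ) (S : ℤ → ℕ → ℂ)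
    (n q : ℤ) (m g : ℕ) :
    ysp T TA α₁ φ₁ fD τ S n m g / ysp T TA α₁ φ₁ fD τ S (n - q) m g =
      Complex.exp (Complex.I * q * φ₁) *
        ((Sprime T α₁ φ₁ τ S n g + Dprime TA fD m) /
          (Sprime T α₁ φ₁ τ S (n - q) g + Dprime TA fD m)) := by
  have hn_split : exp (I * n * φ₁) = exp (I * q * φ₁) * exp (I * ↑(n - q) * φ₁) := by
    rw [← exp_add]; push_cast; ring_nf
  rw [ysp_eq_mul_Sprime_add_Dprime T TA hα, ysp_eq_mul_Sprime_add_Dprime T TA hα, hn_split]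
  set c := α₁ * exp (I * ↑(n - q) * φ₁) * exp (-I * 2 * Real.pi * (g / T) * τ)
  have hc : c ≠ 0 := by simp [c, hα, exp_ne_zero]
  calc _ = c * (exp (I * q * φ₁) * (Sprime T α₁ φ₁ τ S n g + Dprime TA fD m)) /
        (c * (Sprime T α₁ φ₁ τ S (n - q) g + Dprime TA fD m)) := by
          congr 1; simp only [c]; ring
    _ = _ := by rw [mul_div_mul_left _ _ hc, mul_div_assoc]

/-- Separated factorization of the single-path CSI ratio (equation (25)): for
`α₁ ≠ 0` and `y_{n−q}[m,g] ≠ 0`,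
`y_n[m,g]/y_{n−q}[m,g] = e^{i q φ₁} (S'_n[g] + D'[m])/(S'_{n−q}[g] + D'[m])`,
so the packet index `m` and the subcarrier index `g` are separated. -/
theorem csi_ratio_separated_factorization
    (T TA : ℝ) (hT : 0 < T) (hTA : 0 < TA)
    (α₁ : ℂ) (hα : α₁ ≠ 0) (φ₁ fD τ : ℝ) (S : ℤ → ℕ → ℂ)
    (n q : ℤ) (m g : ℕ)
    (hy : ysp T TA α₁ φ₁ fD τ S (n - q) m g ≠ 0) :
    ysp T TA α₁ φ₁ fD τ S n m g / ysp T TA α₁ φ₁ fD τ S (n - q) m g =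
      Complex.exp (Complex.I * q * φ₁) *
        ((Sprime T α₁ φ₁ τ S n g + Dprime TA fD m) /
          (Sprime T α₁ φ₁ τ S (n - q) g + Dprime TA fD m)) :=
  csi_ratio_separated_factorization_general T TA α₁ hα φ₁ fD τ S n q m g
end
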